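/- In the mixed Deffuant model with i.i.d. initial opinions in Δ, assume inf_{t≥0} μ(t) > 0, ε > r̂, and that the social graph E(t) is a connected graph on V for infinitely many times t. Then for every η with 0 < η < ε − r̂, setting δ = η/|V|, the event A = { T_δ < ∞ and ‖x_i(T_δ) − ĉ‖ ≤ ε − r̂ − η for some i ∈ V } is almost surely contained in the consensus event 𝒞, i.e., P(A \ 𝒞) = 0. -/

import Mathlib

open MeasureTheory ProbabilityTheory Filter
open scoped ENNReal

open scoped Classical in
/-- One step of the mixed Deffuant model: given confidence threshold `ε`, convergence
parameter `μt`, social edge set `Et` and selected (unordered) pair `p`, each endpoint of `p`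
moves toward the other at rate `μt` provided `p` is a social edge and the two opinions are
within distance `ε`; all other agents keep their opinion. -/
noncomputable def deffuantStep {V W : Type*} [NormedAddCommGroup W] [NormedSpace ℝ W]
    (ε μt : ℝ) (Et : Set (Sym2 V)) (p : Sym2 V) (x : V → W) : V → W :=
  fun k =>
    if h : k ∈ p then
      if p ∈ Et ∧ ‖x k - x (Sym2.Mem.other h)‖ ≤ ε then
        x k + μt • (x (Sym2.Mem.other h) - x k)
      else x k
    else x k

/-- The trajectory of the mixed Deffuant model with confidence threshold `ε`, convergence
parameters `μ`, social edge sets `E`, selected pairs `e` and initial opinions `x0`. -/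
noncomputable def deffuantTraj {V W : Type*} [NormedAddCommGroup W] [NormedSpace ℝ W]
    (ε : ℝ) (μ : ℕ → ℝ) (E : ℕ → Set (Sym2 V)) (e : ℕ → Sym2 V) (x0 : V → W) :
    ℕ → V → W
  | 0 => x0
  | t + 1 => deffuantStep ε (μ t) (E t) (e t) (deffuantTraj ε μ E e x0 t)

/-- The sample path of the mixed Deffuant model with random selected pairs `e` and random
initial opinions `x0`, at sample point `ω`. -/
noncomputable def deffuantPath {d : ℕ} {V Ω : Type*} (ε : ℝ) (μ : ℕ → ℝ)
    (E : ℕ → Set (Sym2 V)) (e : ℕ → Ω → Sym2 V)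
    (x0 : V → Ω → EuclideanSpace ℝ (Fin d)) (ω : Ω) : ℕ → V → EuclideanSpace ℝ (Fin d) :=
  deffuantTraj ε μ E (fun t => e t ω) (fun i => x0 i ω)

/-- The social graph with edge set `Et`. -/
def socialGraph {V : Type*} (Et : Set (Sym2 V)) : SimpleGraph V where
  Adj i j := i ≠ j ∧ s(i, j) ∈ Et
  symm := ⟨by
    rintro i j ⟨h1, h2⟩
    exact ⟨h1.symm, by rwa [Sym2.eq_swap]⟩⟩
  loopless := ⟨fun i h => h.1 rfl⟩

/-- The profile graph: its edges are the pairs that are both socially connected (in `Et`) and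
opinion-connected (opinions within distance `ε`). -/
def profileGraph {V W : Type*} [NormedAddCommGroup W]
    (ε : ℝ) (Et : Set (Sym2 V)) (x : V → W) : SimpleGraph V where
  Adj i j := i ≠ j ∧ s(i, j) ∈ Et ∧ ‖x i - x j‖ ≤ ε
  symm := ⟨by
    rintro i j ⟨h1, h2, h3⟩
    exact ⟨h1.symm, by rwa [Sym2.eq_swap], by rwa [norm_sub_rev]⟩⟩
  loopless := ⟨fun i h => h.1 rfl⟩

/-- The set of times `t` entering the definition of the stopping time `T_δ`: the profile at
time `t` is connected and, for every `s ≥ t`, every edge of the profile at time `s` has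
length at most `δ`.  `T_δ` is the infimum of this set, and `T_δ < ∞` iff it is nonempty. -/
noncomputable def goodTimes {d : ℕ} {V Ω : Type*} (ε δ : ℝ) (μ : ℕ → ℝ)
    (E : ℕ → Set (Sym2 V)) (e : ℕ → Ω → Sym2 V)
    (x0 : V → Ω → EuclideanSpace ℝ (Fin d)) (ω : Ω) : Set ℕ :=
  {t | (profileGraph ε (E t) (deffuantPath ε μ E e x0 ω t)).Connected ∧
    ∀ s, t ≤ s → ∀ i j : V, s(i, j) ∈ E s →
      ‖deffuantPath ε μ E e x0 ω s i - deffuantPath ε μ E e x0 ω s j‖ ≤ ε →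
      ‖deffuantPath ε μ E e x0 ω s i - deffuantPath ε μ E e x0 ω s j‖ ≤ δ}

/-- The consensus event `𝒞`: the sample points for which the maximal distance between two
opinions tends to `0` (its limit superior is `0`). -/
noncomputable def consensusSet {d : ℕ} {V Ω : Type*} (ε : ℝ) (μ : ℕ → ℝ)
    (E : ℕ → Set (Sym2 V)) (e : ℕ → Ω → Sym2 V)
    (x0 : V → Ω → EuclideanSpace ℝ (Fin d)) : Set Ω :=
  {ω | Filter.limsup (fun t => ⨆ i : V, ⨆ j : V,
    ‖deffuantPath ε μ E e x0 ω t i - deffuantPath ε μ E e x0 ω t j‖) Filter.atTop = 0}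

/-- Index-dependent codomain for the joint family of the initial opinions (indexed by agents,
`Sum.inl`) and the selected pairs (indexed by times, `Sum.inr`). -/
def mixType (d : ℕ) (V : Type) : V ⊕ ℕ → Type
  | Sum.inl _ => EuclideanSpace ℝ (Fin d)
  | Sum.inr _ => Sym2 V

/-- Measurable space structures on the joint family: Borel on the opinion space, discrete
(`⊤`) on the finitely many pairs. -/
noncomputable def mixMS (d : ℕ) (V : Type) : ∀ k, MeasurableSpace (mixType d V k)
  | Sum.inl _ => (inferInstance : MeasurableSpace (EuclideanSpace ℝ (Fin d)))
  | Sum.inr _ => (⊤ : MeasurableSpace (Sym2 V))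

/-- The joint family of random variables consisting of the initial opinions and the selected
pairs; requiring this family to be `iIndepFun` says that the initial opinions are independent,
the selected pairs are independent, and the two collections are independent of each other. -/
def mixFun {d : ℕ} {V : Type} {Ω : Type*} (x0 : V → Ω → EuclideanSpace ℝ (Fin d))
    (e : ℕ → Ω → Sym2 V) : ∀ k : V ⊕ ℕ, Ω → mixType d V k
  | Sum.inl i => x0 i
  | Sum.inr t => e t

open scoped Topology

/-!
At time `T_δ` the profile is connected with edges of length at most `δ`, so the spread (the
largest distance between two opinions) is below `|V| δ = η < ε`. The spread never increases, so
from then on every social edge is also an opinion edge. Off the consensus event the spread stays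
above some `L > 0`; at each of the infinitely many times at which the social graph is connected,
some social edge then has length at least `β = L / |V|`, and selecting it lowers the energy
`∑ ‖x_i‖²` by at least `(inf μ) β²`. As the energy is nonnegative and nonincreasing, this happens
only finitely often, whereas, by independence of the selected pairs from the past, the selected
pair misses all such edges at `c` consecutive connected times with probability at most
`(1 - 1/N)^c`, where `N` is the number of pairs.
-/

section Step

variable {V W : Type*} [NormedAddCommGroup W] [NormedSpace ℝ W] {ε μt : ℝ} {Et : Set (Sym2 V)}

theorem deffuantStep_apply_of_notMem {p : Sym2 V} {x : V → W} {k : V} (hk : k ∉ p) :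
    deffuantStep ε μt Et p x k = x k := by
  simp [deffuantStep, hk]

theorem exists_deffuantStep_apply_eq (p : Sym2 V) (x : V → W) (k : V) :
    ∃ l, deffuantStep ε μt Et p x k = x k + μt • (x l - x k) := by
  unfold deffuantStep
  split_ifs
  · exact ⟨_, rfl⟩
  all_goals exact ⟨k, by simp⟩

open scoped Classical in
theorem deffuantStep_mk_apply_left (a b : V) (x : V → W) :
    deffuantStep ε μt Et s(a, b) x a =
      if s(a, b) ∈ Et ∧ ‖x a - x b‖ ≤ ε then x a + μt • (x b - x a) else x a := by
  have hb : Sym2.Mem.other (Sym2.mem_mk_left a b) = b :=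
    Sym2.congr_right.mp (Sym2.other_spec _)
  simp only [deffuantStep, dif_pos (Sym2.mem_mk_left a b), hb]

open scoped Classical in
theorem deffuantStep_mk_apply_right (a b : V) (x : V → W) :
    deffuantStep ε μt Et s(a, b) x b =
      if s(a, b) ∈ Et ∧ ‖x a - x b‖ ≤ ε then x b + μt • (x a - x b) else x b := by
  rw [Sym2.eq_swap, deffuantStep_mk_apply_left, Sym2.eq_swap, norm_sub_rev]

theorem deffuantStep_mk_eq_self_of_not {a b : V} {x : V → W}
    (h : ¬(s(a, b) ∈ Et ∧ ‖x a - x b‖ ≤ ε)) : deffuantStep ε μt Et s(a, b) x = x := by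
  funext k
  by_cases hk : k ∈ s(a, b)
  · rcases Sym2.mem_iff.mp hk with rfl | rfl
    · rw [deffuantStep_mk_apply_left, if_neg h]
    · rw [deffuantStep_mk_apply_right, if_neg h]
  · exact deffuantStep_apply_of_notMem hk

theorem deffuantStep_mk_self (a : V) (x : V → W) : deffuantStep ε μt Et s(a, a) x = x := by
  funext k
  by_cases hk : k ∈ s(a, a)
  · obtain rfl : k = a := by simpa using hk
    rw [deffuantStep_mk_apply_left]
    simp
  · exact deffuantStep_apply_of_notMem hk

end Step

section Spread

variable {V W : Type*} [NormedAddCommGroup W]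

noncomputable def spread (x : V → W) : ℝ := ⨆ i, ⨆ j, ‖x i - x j‖

theorem spread_nonneg (x : V → W) : 0 ≤ spread x :=
  Real.iSup_nonneg fun _ => Real.iSup_nonneg fun _ => norm_nonneg _

theorem norm_sub_le_spread [Finite V] (x : V → W) (i j : V) : ‖x i - x j‖ ≤ spread x :=
  (le_ciSup (Set.finite_range _).bddAbove j).trans
    (le_ciSup (f := fun i => ⨆ j, ‖x i - x j‖) (Set.finite_range _).bddAbove i)

theorem spread_le {x : V → W} {c : ℝ} (hc : 0 ≤ c) (h : ∀ i j, ‖x i - x j‖ ≤ c) :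
    spread x ≤ c :=
  Real.iSup_le (fun i => Real.iSup_le (h i) hc) hc

theorem spread_deffuantStep_le [Finite V] [NormedSpace ℝ W] {ε μt : ℝ}
    (hμt : μt ∈ Set.Icc (0 : ℝ) 1) (Et : Set (Sym2 V)) (p : Sym2 V) (x : V → W) :
    spread (deffuantStep ε μt Et p x) ≤ spread x := by
  refine spread_le (spread_nonneg x) fun k l => ?_
  obtain ⟨a, ha⟩ := exists_deffuantStep_apply_eq (ε := ε) (μt := μt) (Et := Et) p x k
  obtain ⟨b, hb⟩ := exists_deffuantStep_apply_eq (ε := ε) (μt := μt) (Et := Et) p x l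
  have h1 : 0 ≤ 1 - μt := sub_nonneg.mpr hμt.2
  calc ‖deffuantStep ε μt Et p x k - deffuantStep ε μt Et p x l‖
      = ‖(1 - μt) • (x k - x l) + μt • (x a - x b)‖ := by rw [ha, hb]; congr 1; module
    _ ≤ (1 - μt) * spread x + μt * spread x := by
      refine (norm_add_le _ _).trans ?_
      rw [norm_smul, norm_smul, Real.norm_of_nonneg h1, Real.norm_of_nonneg hμt.1]
      gcongr
      exacts [norm_sub_le_spread x _ _, hμt.1, norm_sub_le_spread x _ _]
    _ = spread x := by ring

theorem antitone_spread_deffuantTraj [Finite V] [NormedSpace ℝ W] {ε : ℝ} {μ : ℕ → ℝ}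
    (hμ : ∀ t, μ t ∈ Set.Icc (0 : ℝ) 1) (E : ℕ → Set (Sym2 V)) (e : ℕ → Sym2 V) (x0 : V → W) :
    Antitone fun t => spread (deffuantTraj ε μ E e x0 t) :=
  antitone_nat_of_succ_le fun t => spread_deffuantStep_le (hμ t) _ _ _

theorem SimpleGraph.Walk.norm_sub_le_length_mul {G : SimpleGraph V} (x : V → W) {c : ℝ}
    (h : ∀ a b, G.Adj a b → ‖x a - x b‖ ≤ c) {u v : V} (w : G.Walk u v) :
    ‖x u - x v‖ ≤ w.length * c := by
  induction w with
  | nil => simp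
  | @cons u m v hadj w ih =>
    calc ‖x u - x v‖ ≤ ‖x u - x m‖ + ‖x m - x v‖ := norm_sub_le_norm_sub_add_norm_sub _ _ _
      _ ≤ c + w.length * c := add_le_add (h u m hadj) ih
      _ = (w.cons hadj).length * c := by rw [SimpleGraph.Walk.length_cons]; push_cast; ring

theorem SimpleGraph.Connected.spread_lt [Fintype V] {G : SimpleGraph V} (hG : G.Connected)
    (x : V → W) {c : ℝ} (hc : 0 < c) (h : ∀ a b, G.Adj a b → ‖x a - x b‖ ≤ c) :
    spread x < Fintype.card V * c := by
  classical
  have hcard : 1 ≤ (Fintype.card V : ℝ) := by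
    have := hG.nonempty
    exact_mod_cast Fintype.card_pos
  have hpath : ∀ i j, ‖x i - x j‖ ≤ (Fintype.card V - 1) * c := by
    intro i j
    obtain ⟨w⟩ := hG.preconnected i j
    have hlen : (w.toPath.1.length : ℝ) + 1 ≤ Fintype.card V := by
      exact_mod_cast w.toPath.2.length_lt
    exact (w.toPath.1.norm_sub_le_length_mul x h).trans (by nlinarith)
  calc spread x ≤ (Fintype.card V - 1) * c := spread_le (by nlinarith) hpath
    _ < Fintype.card V * c := by linarith

def longActiveEdges (ε β : ℝ) (Et : Set (Sym2 V)) (x : V → W) : Set (Sym2 V) :=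
  {p | ∃ a b, p = s(a, b) ∧ a ≠ b ∧ s(a, b) ∈ Et ∧ β ≤ ‖x a - x b‖ ∧ ‖x a - x b‖ ≤ ε}

theorem longActiveEdges_nonempty [Fintype V] {ε β : ℝ} {Et : Set (Sym2 V)}
    (hE : (socialGraph Et).Connected) {x : V → W} (hε : spread x ≤ ε) (hβ : 0 < β)
    (hβx : Fintype.card V * β ≤ spread x) :
    (longActiveEdges ε β Et x).Nonempty := by
  by_contra hempty
  have hshort : ∀ a b, (socialGraph Et).Adj a b → ‖x a - x b‖ ≤ β := by
    intro a b hab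
    by_contra hlong
    exact hempty ⟨s(a, b), a, b, rfl, hab.1, hab.2, (not_le.mp hlong).le,
      (norm_sub_le_spread x a b).trans hε⟩
  linarith [hE.spread_lt x hβ hshort]

theorem not_isDiag_of_mem_longActiveEdges {ε β : ℝ} {Et : Set (Sym2 V)} {x : V → W} {p : Sym2 V}
    (hp : p ∈ longActiveEdges ε β Et x) : ¬p.IsDiag := by
  obtain ⟨a, b, rfl, hab, -⟩ := hp
  simpa using hab

end Spread

section Energy

variable {V W : Type*} [Fintype V] [NormedAddCommGroup W]

noncomputable def energy (x : V → W) : ℝ := ∑ k, ‖x k‖ ^ 2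

theorem energy_nonneg (x : V → W) : 0 ≤ energy x :=
  Finset.sum_nonneg fun _ _ => sq_nonneg _

variable [InnerProductSpace ℝ W] {ε μt : ℝ} {Et : Set (Sym2 V)}

omit [Fintype V] in
theorem norm_add_smul_sub_sq_add_norm_add_smul_sub_sq (u v : W) (c : ℝ) :
    ‖u + c • (v - u)‖ ^ 2 + ‖v + c • (u - v)‖ ^ 2 =
      ‖u‖ ^ 2 + ‖v‖ ^ 2 - 2 * c * (1 - c) * ‖u - v‖ ^ 2 := by
  have hu : u + c • (v - u) = u - c • (u - v) := by module
  have hinner : inner ℝ u (u - v) - inner ℝ v (u - v) = ‖u - v‖ ^ 2 := by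
    rw [← inner_sub_left, real_inner_self_eq_norm_sq]
  rw [hu, norm_sub_sq_real, norm_add_sq_real, real_inner_smul_right, real_inner_smul_right,
    norm_smul, Real.norm_eq_abs, mul_pow, sq_abs]
  linear_combination (-2 * c) * hinner

theorem energy_deffuantStep_mk {a b : V} (hab : a ≠ b) {x : V → W}
    (h : s(a, b) ∈ Et ∧ ‖x a - x b‖ ≤ ε) :
    energy (deffuantStep ε μt Et s(a, b) x) =
      energy x - 2 * μt * (1 - μt) * ‖x a - x b‖ ^ 2 := by
  set y := deffuantStep ε μt Et s(a, b) x
  have hdiff : energy y - energy x = (‖y a‖ ^ 2 - ‖x a‖ ^ 2) + (‖y b‖ ^ 2 - ‖x b‖ ^ 2) := by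
    rw [energy, energy, ← Finset.sum_sub_distrib]
    refine Fintype.sum_eq_add a b hab fun k hk => ?_
    have hk' : k ∉ s(a, b) := by simpa [Sym2.mem_iff] using hk
    rw [show y k = x k from deffuantStep_apply_of_notMem hk', sub_self]
  have hya : y a = x a + μt • (x b - x a) := by simp only [y, deffuantStep_mk_apply_left, if_pos h]
  have hyb : y b = x b + μt • (x a - x b) := by simp only [y, deffuantStep_mk_apply_right, if_pos h]
  have := norm_add_smul_sub_sq_add_norm_add_smul_sub_sq (x a) (x b) μt
  rw [← hya, ← hyb] at this
  linarith

theorem energy_deffuantStep_add_le {a b : V} (hab : a ≠ b) {x : V → W}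
    (h : s(a, b) ∈ Et ∧ ‖x a - x b‖ ≤ ε) (hμt : μt ∈ Set.Icc (0 : ℝ) (1 / 2)) :
    energy (deffuantStep ε μt Et s(a, b) x) + μt * ‖x a - x b‖ ^ 2 ≤ energy x := by
  rw [energy_deffuantStep_mk hab h]
  have : 0 ≤ μt * (1 - 2 * μt) * ‖x a - x b‖ ^ 2 :=
    mul_nonneg (mul_nonneg hμt.1 (by linarith [hμt.2])) (sq_nonneg _)
  linarith

theorem energy_deffuantStep_le (hμt : μt ∈ Set.Icc (0 : ℝ) 1) (p : Sym2 V) (x : V → W) :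
    energy (deffuantStep ε μt Et p x) ≤ energy x := by
  induction p using Sym2.ind with
  | _ a b =>
    by_cases hab : a = b
    · rw [hab, deffuantStep_mk_self]
    by_cases h : s(a, b) ∈ Et ∧ ‖x a - x b‖ ≤ ε
    · rw [energy_deffuantStep_mk hab h]
      have : 0 ≤ 2 * μt * (1 - μt) * ‖x a - x b‖ ^ 2 :=
        mul_nonneg (mul_nonneg (by linarith [hμt.1]) (by linarith [hμt.2])) (sq_nonneg _)
      linarith
    · rw [deffuantStep_mk_eq_self_of_not h]

end Energy

theorem Antitone.eventually_not_of_le_sub {f : ℕ → ℝ} (hf : Antitone f) (hf0 : ∀ t, 0 ≤ f t)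
    {c : ℝ} (hc : 0 < c) {p : ℕ → Prop} (hp : ∀ t, p t → f (t + 1) ≤ f t - c) :
    ∀ᶠ t in atTop, ¬p t := by
  by_contra h
  obtain ⟨ψ, hψ, hpψ⟩ :=
    extraction_of_frequently_atTop ((not_eventually.mp h).mono fun _ => not_not.mp)
  have hdrop : ∀ k : ℕ, f (ψ k + 1) ≤ f 0 - (k + 1) * c := by
    intro k
    induction k with
    | zero =>
      push_cast
      linarith [hp _ (hpψ 0), hf (Nat.zero_le (ψ 0))]
    | succ k ih =>
      have := hf (Nat.succ_le_of_lt (hψ k.lt_succ_self))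
      have := hp _ (hpψ (k + 1))
      push_cast
      linarith
  obtain ⟨k, hk⟩ := exists_nat_gt (f 0 / c)
  rw [div_lt_iff₀ hc] at hk
  linarith [hdrop k, hf0 (ψ k + 1)]

section Trajectory

variable {V W : Type*} [Fintype V] [NormedAddCommGroup W] [InnerProductSpace ℝ W]
  {ε : ℝ} {μ : ℕ → ℝ} {E : ℕ → Set (Sym2 V)} {e : ℕ → Sym2 V} {x0 : V → W}

theorem antitone_energy_deffuantTraj (hμ : ∀ t, μ t ∈ Set.Icc (0 : ℝ) 1) :
    Antitone fun t => energy (deffuantTraj ε μ E e x0 t) :=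
  antitone_nat_of_succ_le fun t => energy_deffuantStep_le (hμ t) _ _

theorem eventually_notMem_longActiveEdges (hμ : ∀ t, μ t ∈ Set.Icc (0 : ℝ) (1 / 2))
    (hinf : 0 < ⨅ t, μ t) {β : ℝ} (hβ : 0 < β) :
    ∀ᶠ t in atTop, e t ∉ longActiveEdges ε β (E t) (deffuantTraj ε μ E e x0 t) := by
  set μ₀ := ⨅ t, μ t
  have hμ₀le : ∀ t, μ₀ ≤ μ t := ciInf_le ⟨0, Set.forall_mem_range.mpr fun t => (hμ t).1⟩
  have hμ1 : ∀ t, μ t ∈ Set.Icc (0 : ℝ) 1 :=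
    fun t => Set.Icc_subset_Icc_right (by norm_num) (hμ t)
  refine (antitone_energy_deffuantTraj (ε := ε) (E := E) (e := e) (x0 := x0) hμ1
    ).eventually_not_of_le_sub (fun t => energy_nonneg _) (by positivity : 0 < μ₀ * β ^ 2) ?_
  rintro t ⟨a, b, he, hab, hEt, hβle, hεle⟩
  have hdrop := energy_deffuantStep_add_le (μt := μ t) (x := deffuantTraj ε μ E e x0 t) hab
    ⟨hEt, hεle⟩ (hμ t)
  have hμβ :
      μ₀ * β ^ 2 ≤ μ t * ‖deffuantTraj ε μ E e x0 t a - deffuantTraj ε μ E e x0 t b‖ ^ 2 :=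
    mul_le_mul (hμ₀le t) (pow_le_pow_left₀ hβ.le hβle 2) (by positivity) (hμ t).1
  simp only [deffuantTraj, he]
  linarith

theorem eventually_longActiveEdges_nonempty_and_notMem (hμ : ∀ t, μ t ∈ Set.Icc (0 : ℝ) (1 / 2))
    (hinf : 0 < ⨅ t, μ t) {φ : ℕ → ℕ} (hφ : StrictMono φ)
    (hconn : ∀ k, (socialGraph (E (φ k))).Connected) {m : ℕ}
    (hm : spread (deffuantTraj ε μ E e x0 m) ≤ ε) {β : ℝ} (hβ : 0 < β)
    (hβspread : ∀ t, Fintype.card V * β ≤ spread (deffuantTraj ε μ E e x0 t)) :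
    ∀ᶠ k in atTop, (longActiveEdges ε β (E (φ k)) (deffuantTraj ε μ E e x0 (φ k))).Nonempty ∧
      e (φ k) ∉ longActiveEdges ε β (E (φ k)) (deffuantTraj ε μ E e x0 (φ k)) := by
  have hμ1 : ∀ t, μ t ∈ Set.Icc (0 : ℝ) 1 :=
    fun t => Set.Icc_subset_Icc_right (by norm_num) (hμ t)
  filter_upwards [eventually_ge_atTop m,
    hφ.tendsto_atTop.eventually
      (eventually_notMem_longActiveEdges (E := E) (e := e) (x0 := x0) hμ hinf hβ)] with k hk hmiss
  refine ⟨longActiveEdges_nonempty (hconn k) ?_ hβ (hβspread _), hmiss⟩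
  exact (antitone_spread_deffuantTraj hμ1 E e x0 (hk.trans hφ.le_apply)).trans hm

end Trajectory

section Probability

variable {Ω γ : Type*} [Finite γ] {mΩ : MeasurableSpace Ω} {P : Measure Ω}

theorem measurableSet_nonempty_and_notMem {m : MeasurableSpace Ω} {Y : Ω → Set γ}
    (hY : Measurable[m] Y) {Z : Ω → γ} (hZ : @Measurable Ω γ m ⊤ Z) :
    MeasurableSet[m] {ω | (Y ω).Nonempty ∧ Z ω ∉ Y ω} := by
  have hsplit : {ω | (Y ω).Nonempty ∧ Z ω ∉ Y ω} =
      ⋃ S : Set γ, Y ⁻¹' {S} ∩ {ω | S.Nonempty ∧ Z ω ∉ S} := by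
    ext ω
    simp
  rw [hsplit]
  refine MeasurableSet.iUnion fun S => (hY (measurableSet_singleton S)).inter ?_
  by_cases hS : S.Nonempty
  · simp only [hS, true_and]
    exact hZ (MeasurableSpace.measurableSet_top (s := Sᶜ))
  · simp [hS]

theorem measure_inter_nonempty_and_notMem_le {m : MeasurableSpace Ω} (hm : m ≤ mΩ)
    {Y : Ω → Set γ} (hY : Measurable[m] Y) {Z : Ω → γ}
    (hind : Indep m (MeasurableSpace.comap Z ⊤) P) {κ : ℝ≥0∞}
    (hκ : ∀ ω, (Y ω).Nonempty → P {ω' | Z ω' ∉ Y ω} ≤ κ) {H : Set Ω}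
    (hH : MeasurableSet[m] H) :
    P (H ∩ {ω | (Y ω).Nonempty ∧ Z ω ∉ Y ω}) ≤ κ * P H := by
  set G := {ω | (Y ω).Nonempty ∧ Z ω ∉ Y ω}
  have hcover : ∀ A : Set Ω, A = ⋃ S, A ∩ Y ⁻¹' {S} := fun A => by ext; simp
  have hpiece : ∀ S, P (H ∩ G ∩ Y ⁻¹' {S}) ≤ κ * P (H ∩ Y ⁻¹' {S}) := by
    intro S
    rcases (H ∩ G ∩ Y ⁻¹' {S}).eq_empty_or_nonempty with hempty | ⟨ω, ⟨-, hne, -⟩, rfl⟩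
    · simp [hempty]
    have hsub : H ∩ G ∩ Y ⁻¹' {Y ω} ⊆ (H ∩ Y ⁻¹' {Y ω}) ∩ Z ⁻¹' (Y ω)ᶜ := by
      rintro ω' ⟨⟨hω'H, -, hZ⟩, hY'⟩
      rw [Set.mem_preimage, Set.mem_singleton_iff] at hY'
      exact ⟨⟨hω'H, hY'⟩, by rwa [← hY']⟩
    calc P (H ∩ G ∩ Y ⁻¹' {Y ω}) ≤ P ((H ∩ Y ⁻¹' {Y ω}) ∩ Z ⁻¹' (Y ω)ᶜ) := measure_mono hsub
      _ = P (H ∩ Y ⁻¹' {Y ω}) * P (Z ⁻¹' (Y ω)ᶜ) :=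
        (Indep_iff _ _ P).mp hind _ _ (hH.inter (hY (measurableSet_singleton _)))
          ⟨(Y ω)ᶜ, trivial, rfl⟩
      _ ≤ P (H ∩ Y ⁻¹' {Y ω}) * κ := by gcongr; exact hκ ω hne
      _ = κ * P (H ∩ Y ⁻¹' {Y ω}) := mul_comm _ _
  have hdisj : Pairwise (Function.onFun Disjoint fun S => H ∩ Y ⁻¹' {S}) := fun S S' hSS' =>
    ((Set.disjoint_singleton.mpr hSS').preimage Y).mono Set.inter_subset_right
      Set.inter_subset_right
  calc P (H ∩ G) = P (⋃ S, H ∩ G ∩ Y ⁻¹' {S}) := by rw [← hcover]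
    _ ≤ ∑' S, P (H ∩ G ∩ Y ⁻¹' {S}) := measure_iUnion_le _
    _ ≤ ∑' S, κ * P (H ∩ Y ⁻¹' {S}) := ENNReal.tsum_le_tsum hpiece
    _ = κ * P (⋃ S, H ∩ Y ⁻¹' {S}) := by
      rw [ENNReal.tsum_mul_left, measure_iUnion hdisj fun S =>
        hm _ (hH.inter (hY (measurableSet_singleton S)))]
    _ = κ * P H := by rw [← hcover]

omit [Finite γ]

theorem measure_iInter_eq_zero_of_measure_inter_le [IsFiniteMeasure P]
    {F : ℕ → MeasurableSpace Ω} (hF : Monotone F) {G : ℕ → Set Ω}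
    (hG : ∀ k, MeasurableSet[F (k + 1)] (G k)) {κ : ℝ≥0∞} (hκ : κ < 1)
    (hle : ∀ k H, MeasurableSet[F k] H → P (H ∩ G k) ≤ κ * P H) :
    P (⋂ k, G k) = 0 := by
  have hmeas : ∀ c, MeasurableSet[F c] (⋂ k < c, G k) := fun c =>
    MeasurableSet.biInter (Set.to_countable _) fun k hk => hF (Nat.succ_le_of_lt hk) _ (hG k)
  have hbound : ∀ c, P (⋂ k < c, G k) ≤ κ ^ c * P Set.univ := by
    intro c
    induction c with
    | zero => simp
    | succ c ih =>
      rw [Set.biInter_lt_succ]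
      calc P ((⋂ k < c, G k) ∩ G c) ≤ κ * P (⋂ k < c, G k) := hle c _ (hmeas c)
        _ ≤ κ * (κ ^ c * P Set.univ) := by gcongr
        _ = κ ^ (c + 1) * P Set.univ := by ring
  have hlim : Tendsto (fun c => κ ^ c * P Set.univ) atTop (𝓝 0) := by
    simpa using ENNReal.Tendsto.mul_const (ENNReal.tendsto_pow_atTop_nhds_zero_of_lt_one hκ)
      (Or.inr (measure_ne_top P Set.univ))
  refine le_antisymm (ge_of_tendsto' hlim fun c => ?_) zero_le
  exact (measure_mono fun ω hω => Set.mem_iInter₂.mpr fun k _ => Set.mem_iInter.mp hω k).trans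
    (hbound c)

theorem measure_setOf_eventually_eq_zero_of_measure_inter_le [IsFiniteMeasure P]
    {F : ℕ → MeasurableSpace Ω} (hF : Monotone F) {G : ℕ → Set Ω}
    (hG : ∀ k, MeasurableSet[F (k + 1)] (G k)) {κ : ℝ≥0∞} (hκ : κ < 1)
    (hle : ∀ k H, MeasurableSet[F k] H → P (H ∩ G k) ≤ κ * P H) :
    P {ω | ∀ᶠ k in atTop, ω ∈ G k} = 0 := by
  have hsub : {ω | ∀ᶠ k in atTop, ω ∈ G k} ⊆ ⋃ M, ⋂ k, G (M + k) := by
    intro ω hω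
    obtain ⟨M, hM⟩ := eventually_atTop.mp hω
    exact Set.mem_iUnion.mpr ⟨M, Set.mem_iInter.mpr fun k => hM _ (Nat.le_add_right M k)⟩
  refine measure_mono_null hsub (measure_iUnion_null fun M => ?_)
  exact measure_iInter_eq_zero_of_measure_inter_le (F := fun k => F (M + k))
    (fun a b hab => hF (by omega)) (fun k => hG (M + k)) hκ (fun k => hle (M + k))

end Probability

theorem measurable_deffuantStep {V W : Type*} [NormedAddCommGroup W] [NormedSpace ℝ W]
    [MeasurableSpace W] [BorelSpace W] [SecondCountableTopology W] (ε μt : ℝ)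
    (Et : Set (Sym2 V)) (p : Sym2 V) :
    Measurable (deffuantStep ε μt Et p : (V → W) → V → W) := by
  classical
  refine measurable_pi_lambda _ fun k => ?_
  by_cases hk : k ∈ p
  · simp only [deffuantStep, dif_pos hk]
    refine Measurable.ite ?_ (by fun_prop) (by fun_prop)
    exact measurableSet_setOfPred.mpr (measurable_const.and
      (measurableSet_setOfPred.mp (measurableSet_le (by fun_prop) measurable_const)))
  · simp only [deffuantStep, dif_neg hk]
    fun_prop

theorem measurable_longActiveEdges {V W : Type*} [Countable V] [NormedAddCommGroup W]
    [MeasurableSpace W] [BorelSpace W] [SecondCountableTopology W] (ε β : ℝ)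
    (Et : Set (Sym2 V)) : Measurable (longActiveEdges ε β Et : (V → W) → Set (Sym2 V)) := by
  refine measurable_set_iff.mpr fun p => Measurable.exists fun a => Measurable.exists fun b => ?_
  have hnorm : Measurable fun x : V → W => ‖x a - x b‖ := by fun_prop
  refine measurable_const.and (measurable_const.and (measurable_const.and ?_))
  exact (measurableSet_setOfPred.mp (measurableSet_le measurable_const hnorm)).and
    (measurableSet_setOfPred.mp (measurableSet_le hnorm measurable_const))

section PastSigma

variable {d : ℕ} {V : Type} {Ω : Type*} {x0 : V → Ω → EuclideanSpace ℝ (Fin d)}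
  {e : ℕ → Ω → Sym2 V}

noncomputable abbrev pastSigma (x0 : V → Ω → EuclideanSpace ℝ (Fin d)) (e : ℕ → Ω → Sym2 V)
    (t : ℕ) : MeasurableSpace Ω :=
  ⨆ k ∈ (Set.range Sum.inl ∪ Sum.inr '' Set.Iio t : Set (V ⊕ ℕ)),
    MeasurableSpace.comap (mixFun x0 e k) (mixMS d V k)

theorem monotone_pastSigma : Monotone (pastSigma (d := d) x0 e) := by
  intro s t hst
  refine biSup_mono fun k hk => ?_
  rcases hk with hk | ⟨u, hu, rfl⟩
  · exact Or.inl hk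
  · exact Or.inr ⟨u, lt_of_lt_of_le hu hst, rfl⟩

theorem comap_mixFun_le_pastSigma {t : ℕ} {k : V ⊕ ℕ}
    (hk : k ∈ (Set.range Sum.inl ∪ Sum.inr '' Set.Iio t : Set (V ⊕ ℕ))) :
    MeasurableSpace.comap (mixFun x0 e k) (mixMS d V k) ≤ pastSigma x0 e t :=
  le_biSup (fun k => MeasurableSpace.comap (mixFun x0 e k) (mixMS d V k)) hk

theorem measurable_pastSigma_initial (t : ℕ) (i : V) : Measurable[pastSigma x0 e t] (x0 i) :=
  measurable_iff_comap_le.mpr (comap_mixFun_le_pastSigma (k := Sum.inl i) (Or.inl ⟨i, rfl⟩))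

theorem measurable_pastSigma_pair {s t : ℕ} (hst : s < t) :
    @Measurable Ω (Sym2 V) (pastSigma (d := d) x0 e t) ⊤ (e s) :=
  measurable_iff_comap_le.mpr (comap_mixFun_le_pastSigma (k := Sum.inr s) (Or.inr ⟨s, hst, rfl⟩))

theorem measurable_deffuantPath [Countable V] (ε : ℝ) (μ : ℕ → ℝ) (E : ℕ → Set (Sym2 V))
    (t : ℕ) : Measurable[pastSigma x0 e t] fun ω => deffuantPath ε μ E e x0 ω t := by
  induction t with
  | zero =>
    let _ := pastSigma x0 e 0
    exact measurable_pi_lambda _ fun i => measurable_pastSigma_initial 0 i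
  | succ t ih =>
    let _ : MeasurableSpace (Sym2 V) := ⊤
    have hstep : Measurable fun q : (V → EuclideanSpace ℝ (Fin d)) × Sym2 V =>
        deffuantStep ε (μ t) (E t) q.2 q.1 :=
      measurable_from_prod_countable_left fun p => measurable_deffuantStep ε (μ t) (E t) p
    exact hstep.comp ((ih.mono (monotone_pastSigma t.le_succ) le_rfl).prodMk
      (measurable_pastSigma_pair t.lt_succ_self))

variable [MeasurableSpace Ω]

theorem comap_mixFun_le (hx0 : ∀ i, Measurable (x0 i))
    (he : ∀ t, @Measurable Ω (Sym2 V) _ ⊤ (e t)) :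
    ∀ k, MeasurableSpace.comap (mixFun x0 e k) (mixMS d V k) ≤ ‹MeasurableSpace Ω›
  | Sum.inl i => (hx0 i).comap_le
  | Sum.inr t => (he t).comap_le

theorem pastSigma_le (hx0 : ∀ i, Measurable (x0 i))
    (he : ∀ t, @Measurable Ω (Sym2 V) _ ⊤ (e t)) (t : ℕ) :
    pastSigma x0 e t ≤ ‹MeasurableSpace Ω› :=
  iSup₂_le fun k _ => comap_mixFun_le hx0 he k

theorem indep_pastSigma {P : Measure Ω} (hx0 : ∀ i, Measurable (x0 i))
    (he : ∀ t, @Measurable Ω (Sym2 V) _ ⊤ (e t))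
    (hindep : @iIndepFun _ _ _ _ (mixMS d V) (mixFun x0 e) P) (t : ℕ) :
    Indep (pastSigma x0 e t) (MeasurableSpace.comap (e t) ⊤) P := by
  have hdisj : Disjoint (Set.range Sum.inl ∪ Sum.inr '' Set.Iio t : Set (V ⊕ ℕ)) {Sum.inr t} := by
    rw [Set.disjoint_singleton_right]
    rintro (⟨i, hi⟩ | ⟨s, hs, hst⟩)
    · cases hi
    · cases hst
      exact lt_irrefl _ (Set.mem_Iio.mp hs)
  have h := indep_iSup_of_disjoint (comap_mixFun_le hx0 he)
    ((iIndepFun_iff_iIndep _ _ _).mp hindep) hdisj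
  rwa [iSup_singleton] at h

end PastSigma

theorem measure_notMem_le_of_uniform {V Ω : Type*} [MeasurableSpace Ω] {P : Measure Ω}
    [IsProbabilityMeasure P] {e : Ω → Sym2 V}
    (he : @Measurable Ω (Sym2 V) _ ⊤ e)
    (hunif : ∀ p : Sym2 V, ¬p.IsDiag →
      P {ω | e ω = p} = ((Nat.card {q : Sym2 V // ¬q.IsDiag} : ℝ≥0∞))⁻¹)
    {S : Set (Sym2 V)} (hS : ∃ p ∈ S, ¬p.IsDiag) :
    P {ω | e ω ∉ S} ≤ 1 - ((Nat.card {q : Sym2 V // ¬q.IsDiag} : ℝ≥0∞))⁻¹ := by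
  obtain ⟨p, hpS, hp⟩ := hS
  calc P {ω | e ω ∉ S} ≤ P {ω | e ω = p}ᶜ := measure_mono fun ω hω heq => hω (heq ▸ hpS)
    _ = _ := by
      have hmeas : MeasurableSet {ω | e ω = p} := he (MeasurableSpace.measurableSet_top (s := {p}))
      rw [prob_compl_eq_one_sub hmeas, hunif p hp]

section RandomModel

variable {d : ℕ} {V : Type} [Fintype V] {Ω : Type*} {ε : ℝ} {μ : ℕ → ℝ}
  {E : ℕ → Set (Sym2 V)} {e : ℕ → Ω → Sym2 V} {x0 : V → Ω → EuclideanSpace ℝ (Fin d)}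

theorem spread_lt_of_mem_goodTimes {δ : ℝ} {ω : Ω} {m : ℕ}
    (hm : m ∈ goodTimes ε δ μ E e x0 ω) (hδ : 0 < δ) :
    spread (deffuantPath ε μ E e x0 ω m) < Fintype.card V * δ :=
  hm.1.spread_lt _ hδ fun a b hab => hm.2 m le_rfl a b hab.2.1 hab.2.2

theorem exists_pos_le_spread_of_notMem_consensusSet (hμ : ∀ t, μ t ∈ Set.Icc (0 : ℝ) 1) {ω : Ω}
    (hω : ω ∉ consensusSet ε μ E e x0) :
    ∃ L > 0, ∀ t, L ≤ spread (deffuantPath ε μ E e x0 ω t) := by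
  set f := fun t => spread (deffuantPath ε μ E e x0 ω t)
  have hbdd : BddBelow (Set.range f) := ⟨0, Set.forall_mem_range.mpr fun t => spread_nonneg _⟩
  have hlim : limsup f atTop = ⨅ t, f t :=
    (tendsto_atTop_ciInf (antitone_spread_deffuantTraj hμ _ _ _) hbdd).limsup_eq
  refine ⟨⨅ t, f t, lt_of_le_of_ne (le_ciInf fun t => spread_nonneg _) ?_, ciInf_le hbdd⟩
  exact fun h => hω (hlim.trans h.symm)

def longEdgeMissed (ε β : ℝ) (μ : ℕ → ℝ) (E : ℕ → Set (Sym2 V)) (e : ℕ → Ω → Sym2 V)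
    (x0 : V → Ω → EuclideanSpace ℝ (Fin d)) (t : ℕ) : Set Ω :=
  {ω | (longActiveEdges ε β (E t) (deffuantPath ε μ E e x0 ω t)).Nonempty ∧
    e t ω ∉ longActiveEdges ε β (E t) (deffuantPath ε μ E e x0 ω t)}

theorem measurableSet_longEdgeMissed (ε β : ℝ) (μ : ℕ → ℝ) (E : ℕ → Set (Sym2 V)) (t : ℕ) :
    MeasurableSet[pastSigma x0 e (t + 1)] (longEdgeMissed ε β μ E e x0 t) :=
  measurableSet_nonempty_and_notMem ((measurable_longActiveEdges ε β (E t)).comp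
    ((measurable_deffuantPath ε μ E t).mono (monotone_pastSigma t.le_succ) le_rfl))
    (measurable_pastSigma_pair t.lt_succ_self)

theorem exists_eventually_mem_longEdgeMissed (hμ : ∀ t, μ t ∈ Set.Icc (0 : ℝ) (1 / 2))
    (hinf : 0 < ⨅ t, μ t) {φ : ℕ → ℕ} (hφ : StrictMono φ)
    (hconn : ∀ k, (socialGraph (E (φ k))).Connected) {ω : Ω}
    (hω : ω ∉ consensusSet ε μ E e x0) {m : ℕ} (hm : spread (deffuantPath ε μ E e x0 ω m) ≤ ε) :
    ∃ j : ℕ, ∀ᶠ k in atTop, ω ∈ longEdgeMissed ε (1 / (j + 1)) μ E e x0 (φ k) := by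
  have hμ1 : ∀ t, μ t ∈ Set.Icc (0 : ℝ) 1 :=
    fun t => Set.Icc_subset_Icc_right (by norm_num) (hμ t)
  have hV : 0 < (Fintype.card V : ℝ) := by
    have := (hconn 0).nonempty
    exact_mod_cast Fintype.card_pos
  obtain ⟨L, hL, hLle⟩ := exists_pos_le_spread_of_notMem_consensusSet hμ1 hω
  obtain ⟨j, hj⟩ := exists_nat_one_div_lt (div_pos hL hV)
  refine ⟨j, eventually_longActiveEdges_nonempty_and_notMem hμ hinf hφ hconn hm
    Nat.one_div_pos_of_nat fun t => ?_⟩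
  rw [lt_div_iff₀ hV] at hj
  calc (Fintype.card V : ℝ) * (1 / (j + 1)) ≤ L := by linarith
    _ ≤ _ := hLle t

variable [MeasurableSpace Ω] {P : Measure Ω}

theorem measure_inter_longEdgeMissed_le [IsProbabilityMeasure P] (hx0 : ∀ i, Measurable (x0 i))
    (he : ∀ t, @Measurable Ω (Sym2 V) _ ⊤ (e t))
    (hunif : ∀ t, ∀ p : Sym2 V, ¬p.IsDiag →
      P {ω | e t ω = p} = ((Nat.card {q : Sym2 V // ¬q.IsDiag} : ℝ≥0∞))⁻¹)
    (hindep : @iIndepFun _ _ _ _ (mixMS d V) (mixFun x0 e) P) (β : ℝ) (t : ℕ) {H : Set Ω}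
    (hH : MeasurableSet[pastSigma x0 e t] H) :
    P (H ∩ longEdgeMissed ε β μ E e x0 t) ≤
      (1 - ((Nat.card {q : Sym2 V // ¬q.IsDiag} : ℝ≥0∞))⁻¹) * P H :=
  measure_inter_nonempty_and_notMem_le (pastSigma_le hx0 he t)
    ((measurable_longActiveEdges ε β (E t)).comp (measurable_deffuantPath ε μ E t))
    (indep_pastSigma hx0 he hindep t)
    (fun _ ⟨p, hp⟩ => measure_notMem_le_of_uniform (he t) (hunif t)
      ⟨p, hp, not_isDiag_of_mem_longActiveEdges hp⟩) hH

end RandomModel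

theorem deffuant_event_subset_consensus_general
    {d : ℕ} {V : Type} [Fintype V]
    {Ω : Type*} [MeasurableSpace Ω] (P : Measure Ω) [IsProbabilityMeasure P]
    (e : ℕ → Ω → Sym2 V)
    (hemeas : ∀ t, @Measurable Ω (Sym2 V) _ ⊤ (e t))
    (hunif : ∀ t, ∀ p : Sym2 V, ¬ p.IsDiag →
      P {ω | e t ω = p} = ((Nat.card {q : Sym2 V // ¬ q.IsDiag} : ℝ≥0∞))⁻¹)
    (x0 : V → Ω → EuclideanSpace ℝ (Fin d))
    (hx0meas : ∀ i, Measurable (x0 i))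
    (hindep : @iIndepFun _ _ _ _ (mixMS d V) (mixFun x0 e) P)
    (Δ : Set (EuclideanSpace ℝ (Fin d)))
    (cHat : EuclideanSpace ℝ (Fin d))
    (rHat : ℝ) (hrHat : rHat = ⨆ z : Δ, ‖(z : EuclideanSpace ℝ (Fin d)) - cHat‖)
    (ε : ℝ)
    (μ : ℕ → ℝ) (hμ : ∀ t, μ t ∈ Set.Icc (0 : ℝ) (1 / 2)) (hinf : 0 < ⨅ t, μ t)
    (E : ℕ → Set (Sym2 V))
    (hconn : ∃ᶠ t in Filter.atTop, (socialGraph (E t)).Connected)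
    (η : ℝ) (hη : 0 < η) (hηε : η < ε - rHat)
    (δ : ℝ) (hδ : δ = η / Fintype.card V) :
    P ({ω | (goodTimes ε δ μ E e x0 ω).Nonempty ∧
          ∃ i : V, ‖deffuantPath ε μ E e x0 ω (sInf (goodTimes ε δ μ E e x0 ω)) i - cHat‖
            ≤ ε - rHat - η}
        \ consensusSet ε μ E e x0) = 0 := by
  obtain ⟨φ, hφ, hφconn⟩ := extraction_of_frequently_atTop hconn
  have hηε' : η ≤ ε := by
    have : 0 ≤ rHat := hrHat ▸ Real.iSup_nonneg fun _ => norm_nonneg _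
    linarith
  refine measure_mono_null (t := ⋃ j : ℕ,
    {ω | ∀ᶠ k in atTop, ω ∈ longEdgeMissed ε (1 / (j + 1)) μ E e x0 (φ k)}) ?_
    (measure_iUnion_null fun j => ?_)
  · rintro ω ⟨⟨hne, -⟩, hω⟩
    have hm := Nat.sInf_mem hne
    have hV : 0 < (Fintype.card V : ℝ) := by
      have := hm.1.nonempty
      exact_mod_cast Fintype.card_pos
    have hspread := spread_lt_of_mem_goodTimes hm (by rw [hδ]; positivity)
    rw [hδ, mul_div_cancel₀ _ hV.ne'] at hspread
    exact Set.mem_iUnion.mpr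
      (exists_eventually_mem_longEdgeMissed hμ hinf hφ hφconn hω (hspread.le.trans hηε'))
  · exact measure_setOf_eventually_eq_zero_of_measure_inter_le
      (monotone_pastSigma.comp hφ.monotone)
      (fun k => monotone_pastSigma (hφ k.lt_succ_self) _
        (measurableSet_longEdgeMissed ε _ μ E (φ k)))
      (ENNReal.sub_lt_self ENNReal.one_ne_top one_ne_zero
        (ENNReal.inv_ne_zero.mpr (ENNReal.natCast_ne_top _)))
      (fun k H hH => measure_inter_longEdgeMissed_le hx0meas hemeas hunif hindep _ (φ k) hH)

/-- Lemma 4 of the paper. If `inf_t μ(t) > 0`, `ε > rHat` and the social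
graph is connected for infinitely many times, then for `0 < η < ε - rHat` and `δ = η / |V|`,
the event that `T_δ < ∞` and some opinion at time `T_δ` is within `ε - rHat - η` of the
Chebyshev center `cHat` is almost surely contained in the consensus event `𝒞`. -/
theorem deffuant_event_subset_consensus
    {d : ℕ} (hd : 1 ≤ d) {V : Type} [Fintype V] (hV : 2 ≤ Fintype.card V)
    {Ω : Type*} [MeasurableSpace Ω] (P : Measure Ω) [IsProbabilityMeasure P]
    (e : ℕ → Ω → Sym2 V)
    (hemeas : ∀ t, @Measurable Ω (Sym2 V) _ ⊤ (e t))
    (hunif : ∀ t, ∀ p : Sym2 V, ¬ p.IsDiag →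
      P {ω | e t ω = p} = ((Nat.card {q : Sym2 V // ¬ q.IsDiag} : ℝ≥0∞))⁻¹)
    (x0 : V → Ω → EuclideanSpace ℝ (Fin d))
    (hx0meas : ∀ i, Measurable (x0 i))
    (hindep : @iIndepFun _ _ _ _ (mixMS d V) (mixFun x0 e) P)
    (hx0id : ∀ i j : V, Measure.map (x0 i) P = Measure.map (x0 j) P)
    (Δ : Set (EuclideanSpace ℝ (Fin d))) (hΔne : Δ.Nonempty)
    (hΔbd : Bornology.IsBounded Δ) (hΔconv : Convex ℝ Δ)
    (hx0Δ : ∀ i ω, x0 i ω ∈ Δ)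
    (cHat : EuclideanSpace ℝ (Fin d))
    (hcHat : ∀ c, (⨆ z : Δ, ‖(z : EuclideanSpace ℝ (Fin d)) - cHat‖) ≤
      ⨆ z : Δ, ‖(z : EuclideanSpace ℝ (Fin d)) - c‖)
    (rHat : ℝ) (hrHat : rHat = ⨆ z : Δ, ‖(z : EuclideanSpace ℝ (Fin d)) - cHat‖)
    (ε : ℝ) (hε : rHat < ε)
    (μ : ℕ → ℝ) (hμ : ∀ t, μ t ∈ Set.Icc (0 : ℝ) (1 / 2)) (hinf : 0 < ⨅ t, μ t)
    (E : ℕ → Set (Sym2 V))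
    (hconn : ∃ᶠ t in Filter.atTop, (socialGraph (E t)).Connected)
    (η : ℝ) (hη : 0 < η) (hηε : η < ε - rHat)
    (δ : ℝ) (hδ : δ = η / Fintype.card V) :
    P ({ω | (goodTimes ε δ μ E e x0 ω).Nonempty ∧
          ∃ i : V, ‖deffuantPath ε μ E e x0 ω (sInf (goodTimes ε δ μ E e x0 ω)) i - cHat‖
            ≤ ε - rHat - η}
        \ consensusSet ε μ E e x0) = 0 :=
  deffuant_event_subset_consensus_general P e hemeas hunif x0 hx0meas hindep Δ cHat rHat hrHat ε μ
    hμ hinf E hconn η hη hηε δ hδ
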